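/- Let m ≥ 1 and let a, b : Fin m → ℝ be families of nonnegative real numbers each summing to 1. Then ∑_{j=1}^m (a_j − b_j)² = 2 if and only if there exist indices i ≠ k such that a is the indicator vector of i (a_i = 1 and a_j = 0 for j ≠ i) and b is the indicator vector of k (b_k = 1 and b_j = 0 for j ≠ k). -/
import Mathlib


theorem sum_sq_diff_eq_two_iff (m : ℕ) (hm : 1 ≤ m) (a b : Fin m → ℝ)
    (ha : ∀ j, 0 ≤ a j) (hb : ∀ j, 0 ≤ b j)
    (hsa : ∑ j, a j = 1) (hsb : ∑ j, b j = 1) :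
    ∑ j, (a j - b j) ^ 2 = 2 ↔
      ∃ i k : Fin m, i ≠ k ∧ (a i = 1 ∧ ∀ j, j ≠ i → a j = 0) ∧
        (b k = 1 ∧ ∀ j, j ≠ k → b j = 0) := by
  constructor
  · intro h
    have hale : ∀ j, a j ≤ 1 := fun j => by
      have := Finset.single_le_sum (fun i _ => ha i) (Finset.mem_univ j)
      linarith [this.trans_eq hsa]
    have hble : ∀ j, b j ≤ 1 := fun j => by
      have := Finset.single_le_sum (fun i _ => hb i) (Finset.mem_univ j)
      linarith [this.trans_eq hsb]
    have hgnn : ∀ j ∈ Finset.univ,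
        0 ≤ (a j - (a j)^2) + (b j - (b j)^2) + 2 * (a j * b j) := by
      intro j _
      have h3 : 0 ≤ a j * b j := mul_nonneg (ha j) (hb j)
      nlinarith [ha j, hale j, hb j, hble j]
    have hsum : ∑ j, ((a j - (a j)^2) + (b j - (b j)^2) + 2 * (a j * b j)) = 0 := by
      have he : ∑ j, ((a j - b j)^2
          + ((a j - (a j)^2) + (b j - (b j)^2) + 2 * (a j * b j)))
          = ∑ j, (a j + b j) := by
        apply Finset.sum_congr rfl; intro j _; ring
      rw [Finset.sum_add_distrib] at he
      have hr : ∑ j, (a j + b j) = 2 := by rw [Finset.sum_add_distrib, hsa, hsb]; norm_num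
      linarith
    have key : ∀ j : Fin m, (a j)^2 = a j ∧ (b j)^2 = b j ∧ a j * b j = 0 := by
      intro j
      have hz := (Finset.sum_eq_zero_iff_of_nonneg hgnn).mp hsum j (Finset.mem_univ j)
      have h3 : 0 ≤ a j * b j := mul_nonneg (ha j) (hb j)
      have h1 : (a j)^2 ≤ a j := by nlinarith [ha j, hale j]
      have h2 : (b j)^2 ≤ b j := by nlinarith [hb j, hble j]
      refine ⟨by linarith, by linarith, by linarith⟩
    obtain ⟨i, _, hi⟩ := Finset.exists_ne_zero_of_sum_ne_zero (hsa ▸ one_ne_zero)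
    obtain ⟨k, _, hk⟩ := Finset.exists_ne_zero_of_sum_ne_zero (hsb ▸ one_ne_zero)
    have hai : a i = 1 := by
      have := (key i).1
      have : a i * (a i - 1) = 0 := by nlinarith
      rcases mul_eq_zero.mp this with h' | h'
      · exact absurd h' hi
      · linarith
    have hbk : b k = 1 := by
      have := (key k).2.1
      have : b k * (b k - 1) = 0 := by nlinarith
      rcases mul_eq_zero.mp this with h' | h'
      · exact absurd h' hk
      · linarith
    have haj : ∀ j, j ≠ i → a j = 0 := by
      intro j hj
      have hsub : ({i, j} : Finset (Fin m)) ⊆ Finset.univ := Finset.subset_univ _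
      have := Finset.sum_le_sum_of_subset_of_nonneg hsub (fun x _ _ => ha x)
      rw [Finset.sum_pair (Ne.symm hj), hsa] at this
      have := ha j
      linarith
    have hbj : ∀ j, j ≠ k → b j = 0 := by
      intro j hj
      have hsub : ({k, j} : Finset (Fin m)) ⊆ Finset.univ := Finset.subset_univ _
      have := Finset.sum_le_sum_of_subset_of_nonneg hsub (fun x _ _ => hb x)
      rw [Finset.sum_pair (Ne.symm hj), hsb] at this
      have := hb j
      linarith
    have hik : i ≠ k := by
      intro he
      have := (key i).2.2
      rw [hai, he, hbk] at this
      norm_num at this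
    exact ⟨i, k, hik, ⟨hai, haj⟩, ⟨hbk, hbj⟩⟩
  · rintro ⟨i, k, hik, ⟨hai, haj⟩, ⟨hbk, hbj⟩⟩
    have hsub : ({i, k} : Finset (Fin m)) ⊆ Finset.univ := Finset.subset_univ _
    have hz : ∀ x ∈ Finset.univ, x ∉ ({i, k} : Finset (Fin m)) → (a x - b x)^2 = 0 := by
      intro x _ hx
      simp only [Finset.mem_insert, Finset.mem_singleton, not_or] at hx
      rw [haj x hx.1, hbj x hx.2]
      ring
    rw [← Finset.sum_subset hsub hz, Finset.sum_pair hik,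
      hai, hbk, hbj i hik, haj k (Ne.symm hik)]
    norm_num
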